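/- arXiv:2412.06385 — 3 statements merged into one kernel-verified Lean document; each statement's English description precedes it below -/
import Mathlib

section
/- Let n ≥ 1 and let c₁, …, cₙ : ℤ≥0 × ℤ≥0 → ℝ each be multimodular, and define c(d,b) = ∑_{i=1}^n c_i(d(i), b(i)) for d, b ∈ ℤⁿ≥0. Let (d,b), (d',b') ∈ ℤⁿ≥0 × ℤⁿ≥0 and set x = d+b, x' = d'+b'. If i, h ∈ {1,…,n} satisfy d(i) > d'(i), x(i) > x'(i), d(h) < d'(h), x(h) < x'(h) (so that d - χ_i + χ_h and d' + χ_i - χ_h are nonnegative), then c(d, b) + c(d', b') ≥ c(d - χ_i + χ_h, b) + c(d' + χ_i - χ_h, b'), where χ_j denotes the j-th unit vector. -/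
def Multimodular (c : ℕ → ℕ → ℝ) : Prop :=
  (∀ α β : ℕ, c (α + 1) (β + 1) - c (α + 1) β ≥ c α (β + 1) - c α β) ∧
  (∀ α β : ℕ, c α (β + 2) - c α (β + 1) ≥ c (α + 1) (β + 1) - c (α + 1) β) ∧
  (∀ α β : ℕ, c (α + 2) β - c (α + 1) β ≥ c (α + 1) (β + 1) - c α (β + 1))

lemma mm_mono_a {c : ℕ → ℕ → ℝ} (hc : Multimodular c) :
    ∀ k α β, c (α + 1) β - c α β ≤ c (α + k + 1) β - c (α + k) β := by
  intro k
  induction k with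
  | zero => intro α β; simp
  | succ m ih =>
    intro α β
    have h1 := ih α β
    have h2 := hc.1 (α + m) β
    have h3 := hc.2.2 (α + m) β
    have e : α + (m + 1) = α + m + 1 := by omega
    rw [e]
    have e2 : α + m + 1 + 1 = α + m + 2 := by omega
    rw [e2]
    linarith

lemma mm_mono_b {c : ℕ → ℕ → ℝ} (hc : Multimodular c) :
    ∀ k α β, c (α + 1) β - c α β ≤ c (α + 1) (β + k) - c α (β + k) := by
  intro k
  induction k with
  | zero => intro α β; simp
  | succ m ih =>
    intro α β
    have h1 := ih α β
    have h2 := hc.1 α (β + m)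
    have e : β + (m + 1) = β + m + 1 := by omega
    rw [e]
    linarith

lemma mm_diag {c : ℕ → ℕ → ℝ} (hc : Multimodular c) :
    ∀ k α β, c (α + 1) (β + k) - c α (β + k) ≤ c (α + k + 1) β - c (α + k) β := by
  intro k
  induction k with
  | zero => intro α β; simp
  | succ m ih =>
    intro α β
    have h1 := ih (α + 1) β
    have h2 := hc.2.2 (α + m) β
    have h3 := hc.1 (α + m) β
    have hb := mm_mono_b hc m (α) (β)
    -- we want: c (α+1) (β+m+1) - c α (β+m+1) ≤ c (α+m+2) β - c (α+m+1) β
    have h4 : c (α + 1) (β + m + 1) - c α (β + m + 1) ≤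
        c (α + m + 1) (β + 1) - c (α + m) (β + 1) := by
      have := ih α (β + 1)
      have e : β + 1 + m = β + m + 1 := by omega
      rw [e] at this
      exact this
    have e1 : β + (m + 1) = β + m + 1 := by omega
    have e2 : α + (m + 1) = α + m + 1 := by omega
    rw [e1, e2]
    have e3 : α + m + 1 + 1 = α + m + 2 := by omega
    rw [e3]
    linarith

lemma mm_key {c : ℕ → ℕ → ℝ} (hc : Multimodular c)
    (α₂ β₂ α₁ β₁ : ℕ) (h1 : α₂ ≤ α₁) (h2 : α₂ + β₂ ≤ α₁ + β₁) :
    c (α₂ + 1) β₂ - c α₂ β₂ ≤ c (α₁ + 1) β₁ - c α₁ β₁ := by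
  by_cases hb : β₂ ≤ β₁
  · have s1 := mm_mono_b hc (β₁ - β₂) α₂ β₂
    have e : β₂ + (β₁ - β₂) = β₁ := by omega
    rw [e] at s1
    have s2 := mm_mono_a hc (α₁ - α₂) α₂ β₁
    have e2 : α₂ + (α₁ - α₂) = α₁ := by omega
    rw [e2] at s2
    linarith
  · have s1 := mm_diag hc (β₂ - β₁) α₂ β₁
    have e : β₁ + (β₂ - β₁) = β₂ := by omega
    rw [e] at s1
    have s2 := mm_mono_a hc (α₁ - (α₂ + (β₂ - β₁))) (α₂ + (β₂ - β₁)) β₁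
    have e2 : α₂ + (β₂ - β₁) + (α₁ - (α₂ + (β₂ - β₁))) = α₁ := by omega
    rw [e2] at s2
    linarith

theorem stmt_5 (n : ℕ) (hn : 1 ≤ n) (cf : Fin n → ℕ → ℕ → ℝ)
    (hcf : ∀ i, Multimodular (cf i))
    (d b d' b' : Fin n → ℕ) (i h : Fin n)
    (hdi : d' i < d i) (hxi : d' i + b' i < d i + b i)
    (hdh : d h < d' h) (hxh : d h + b h < d' h + b' h) :
    (∑ k, cf k (d k) (b k)) + (∑ k, cf k (d' k) (b' k)) ≥
      (∑ k, cf k (if k = i then d k - 1 else if k = h then d k + 1 else d k) (b k)) +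
      (∑ k, cf k (if k = i then d' k + 1 else if k = h then d' k - 1 else d' k) (b' k)) := by
  have hih : i ≠ h := by
    intro e; rw [e] at hdi; omega
  rw [← Finset.sum_add_distrib, ← Finset.sum_add_distrib]
  apply Finset.sum_le_sum
  intro k _
  by_cases hki : k = i
  · subst hki
    simp only [reduceIte]
    have key := mm_key (hcf k) (d' k) (b' k) (d k - 1) (b k) (by omega) (by omega)
    have e : d k - 1 + 1 = d k := by omega
    rw [e] at key
    linarith
  · by_cases hkh : k = h
    · subst hkh
      simp only [if_neg hki, reduceIte]
      have key := mm_key (hcf k) (d k) (b k) (d' k - 1) (b' k) (by omega) (by omega)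
      have e : d' k - 1 + 1 = d' k := by omega
      rw [e] at key
      linarith
    · simp [hki, hkh]
end

section
/- Let n ≥ 1, let c₁, …, cₙ : ℤ≥0 × ℤ≥0 → ℝ be multimodular, and c(d,b) = ∑ᵢ c_i(d(i),b(i)). Let (d,b), (d',b') ∈ ℤⁿ≥0 × ℤⁿ≥0 with x = d+b, x' = d'+b'. If i satisfies d(i) > d'(i) and x(i) > x'(i), and j satisfies b(j) < b'(j) and x(j) < x'(j), then c(d,b) + c(d',b') ≥ c(d - χ_i, b + χ_j) + c(d' + χ_i, b' - χ_j). -/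
lemma dstep1 (c : ℕ → ℕ → ℝ) (hc : Multimodular c) :
    ∀ t γ, c (γ + 1) 0 - c γ 0 ≤ c (γ + 1) t - c γ t := by
  intro t
  induction t with
  | zero => intro γ; simp
  | succ t ih =>
    intro γ
    have h1 := hc.1 γ t
    have h2 := ih γ
    linarith

lemma dstep1' (c : ℕ → ℕ → ℝ) (hc : Multimodular c) :
    ∀ t γ δ, c (γ + 1) δ - c γ δ ≤ c (γ + 1) (δ + t) - c γ (δ + t) := by
  intro t
  induction t with
  | zero => intro γ δ; simp
  | succ t ih =>
    intro γ δ
    have h1 := hc.1 γ (δ + t)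
    have h2 := ih γ δ
    have e : δ + (t + 1) = δ + t + 1 := by omega
    rw [e]
    linarith

lemma dstep2 (c : ℕ → ℕ → ℝ) (hc : Multimodular c) :
    ∀ t γ δ, c (γ + 1) (δ + t) - c γ (δ + t) ≤ c (γ + t + 1) δ - c (γ + t) δ := by
  intro t
  induction t with
  | zero => intro γ δ; simp
  | succ t ih =>
    intro γ δ
    have h1 := ih γ (δ + 1)
    have h2 := hc.2.2 (γ + t) δ
    have e1 : δ + (t + 1) = δ + 1 + t := by omega
    have e2 : γ + (t + 1) + 1 = γ + t + 2 := by omega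
    have e3 : γ + (t + 1) = γ + t + 1 := by omega
    rw [e1, e2, e3]
    linarith

lemma dmono (c : ℕ → ℕ → ℝ) (hc : Multimodular c) {α' β' α β : ℕ}
    (h1 : α' ≤ α) (h2 : α' + β' ≤ α + β) :
    c (α' + 1) β' - c α' β' ≤ c (α + 1) β - c α β := by
  obtain ⟨k, rfl⟩ := Nat.exists_eq_add_of_le h1
  obtain ⟨m, hm⟩ : ∃ m, β + k = β' + m := ⟨β + k - β', by omega⟩
  have s1 := dstep1' c hc m α' β'
  have s2 := dstep2 c hc k α' β
  rw [← hm] at s1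
  linarith

lemma bstep1 (c : ℕ → ℕ → ℝ) (hc : Multimodular c) :
    ∀ t γ δ, c γ (δ + 1) - c γ δ ≤ c (γ + t) (δ + 1) - c (γ + t) δ := by
  intro t
  induction t with
  | zero => intro γ δ; simp
  | succ t ih =>
    intro γ δ
    have h1 := hc.1 (γ + t) δ
    have h2 := ih γ δ
    have e : γ + (t + 1) = γ + t + 1 := by omega
    rw [e]
    linarith

lemma bstep2 (c : ℕ → ℕ → ℝ) (hc : Multimodular c) :
    ∀ t γ δ, c (γ + t) (δ + 1) - c (γ + t) δ ≤ c γ (δ + t + 1) - c γ (δ + t) := by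
  intro t
  induction t with
  | zero => intro γ δ; simp
  | succ t ih =>
    intro γ δ
    have h1 := ih (γ + 1) δ
    have h2 := hc.2.1 γ (δ + t)
    have e1 : γ + (t + 1) = γ + 1 + t := by omega
    have e2 : δ + (t + 1) + 1 = δ + t + 2 := by omega
    have e3 : δ + (t + 1) = δ + t + 1 := by omega
    rw [e1, e2, e3]
    linarith

lemma bmono (c : ℕ → ℕ → ℝ) (hc : Multimodular c) {α' β' α β : ℕ}
    (h1 : β' ≤ β) (h2 : α' + β' ≤ α + β) :
    c α' (β' + 1) - c α' β' ≤ c α (β + 1) - c α β := by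
  obtain ⟨k, rfl⟩ := Nat.exists_eq_add_of_le h1
  obtain ⟨m, hm⟩ : ∃ m, α + k = α' + m := ⟨α + k - α', by omega⟩
  have s1 := bstep1 c hc m α' β'
  have s2 := bstep2 c hc k α β'
  rw [← hm] at s1
  linarith

theorem stmt_6 (n : ℕ) (hn : 1 ≤ n) (cf : Fin n → ℕ → ℕ → ℝ)
    (hcf : ∀ i, Multimodular (cf i))
    (d b d' b' : Fin n → ℕ) (i j : Fin n)
    (hdi : d' i < d i) (hxi : d' i + b' i < d i + b i)
    (hbj : b j < b' j) (hxj : d j + b j < d' j + b' j) :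
    (∑ k, cf k (d k) (b k)) + (∑ k, cf k (d' k) (b' k)) ≥
      (∑ k, cf k (if k = i then d k - 1 else d k) (if k = j then b k + 1 else b k)) +
      (∑ k, cf k (if k = i then d' k + 1 else d' k) (if k = j then b' k - 1 else b' k)) := by
  have hij : i ≠ j := by
    rintro rfl; omega
  rw [← Finset.sum_add_distrib, ← Finset.sum_add_distrib]
  apply Finset.sum_le_sum
  intro k _
  rcases eq_or_ne k i with rfl | hki
  · rw [if_pos rfl, if_pos rfl, if_neg hij, if_neg hij]
    obtain ⟨m, hm⟩ : ∃ m, d k = m + 1 := ⟨d k - 1, by omega⟩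
    rw [hm]
    simp only [Nat.add_sub_cancel]
    have := dmono (cf k) (hcf k) (α' := d' k) (β' := b' k) (α := m) (β := b k)
      (by omega) (by omega)
    linarith
  · rcases eq_or_ne k j with rfl | hkj
    · rw [if_neg hki, if_neg hki, if_pos rfl, if_pos rfl]
      obtain ⟨m, hm⟩ : ∃ m, b' k = m + 1 := ⟨b' k - 1, by omega⟩
      rw [hm]
      simp only [Nat.add_sub_cancel]
      have := bmono (cf k) (hcf k) (α' := d k) (β' := b k) (α := d' k) (β := m)
        (by omega) (by omega)
      linarith
    · rw [if_neg hki, if_neg hki, if_neg hkj, if_neg hkj]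
end

section
/- Let λ ≥ 1 be an integer, N a finite set partitioned into P and Q, and x, x* : N → ℤ. Suppose x(P) ≤ x*(P), x(Q) ≥ x*(Q), x(i) - x*(i) > -2λ for all i ∈ P, and x(i) - x*(i) < 2λ for all i ∈ Q. Then ∑_{i∈N} |x(i) - x*(i)| < 4λ·|N| (assuming N is nonempty). -/
lemma aux_12 {ι : Type*} (lam : ℤ) (hlam : 1 ≤ lam) (S : Finset ι) (d : ι → ℤ)
    (hsum : ∑ i ∈ S, d i ≤ 0) (hpt : ∀ i ∈ S, d i > -2 * lam) :
    ∑ i ∈ S, |d i| ≤ 4 * lam * S.card ∧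
    (S.Nonempty → ∑ i ∈ S, |d i| < 4 * lam * S.card) := by
  have key : ∀ i ∈ S, |d i| = d i + 2 * max (-(d i)) 0 := by
    intro i _
    rcases le_or_gt 0 (d i) with h | h
    · rw [abs_of_nonneg h, max_eq_right (by omega)]; ring
    · rw [abs_of_neg h, max_eq_left (by omega)]; ring
  have hsumeq : ∑ i ∈ S, |d i| = ∑ i ∈ S, d i + 2 * ∑ i ∈ S, max (-(d i)) 0 := by
    rw [Finset.sum_congr rfl key, Finset.sum_add_distrib, Finset.mul_sum]
  have hbd : ∀ i ∈ S, max (-(d i)) 0 < 2 * lam := by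
    intro i hi; have := hpt i hi; omega
  constructor
  · have : ∑ i ∈ S, max (-(d i)) 0 ≤ ∑ i ∈ S, (2 * lam) :=
      Finset.sum_le_sum fun i hi => (hbd i hi).le
    rw [Finset.sum_const, nsmul_eq_mul] at this
    rw [hsumeq]; nlinarith
  · intro hS
    have : ∑ i ∈ S, max (-(d i)) 0 < ∑ i ∈ S, (2 * lam) :=
      Finset.sum_lt_sum_of_nonempty hS hbd
    rw [Finset.sum_const, nsmul_eq_mul] at this
    rw [hsumeq]; nlinarith

theorem stmt_12 {ι : Type*} [DecidableEq ι] (lam : ℤ) (hlam : 1 ≤ lam)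
    (N P Q : Finset ι) (hdisj : Disjoint P Q) (hunion : P ∪ Q = N)
    (hN : N.Nonempty) (x xs : ι → ℤ)
    (hP : ∑ i ∈ P, x i ≤ ∑ i ∈ P, xs i)
    (hQ : ∑ i ∈ Q, x i ≥ ∑ i ∈ Q, xs i)
    (hptP : ∀ i ∈ P, x i - xs i > -2 * lam)
    (hptQ : ∀ i ∈ Q, x i - xs i < 2 * lam) :
    ∑ i ∈ N, |x i - xs i| < 4 * lam * N.card := by
  have hPsum : ∑ i ∈ P, (x i - xs i) ≤ 0 := by
    rw [Finset.sum_sub_distrib]; omega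
  have hQsum : ∑ i ∈ Q, (xs i - x i) ≤ 0 := by
    rw [Finset.sum_sub_distrib]; omega
  obtain ⟨hPle, hPlt⟩ := aux_12 lam hlam P (fun i => x i - xs i) hPsum hptP
  obtain ⟨hQle, hQlt⟩ := aux_12 lam hlam Q (fun i => xs i - x i) hQsum
    (fun i hi => by show xs i - x i > -2 * lam; have := hptQ i hi; omega)
  beta_reduce at hPle hPlt hQle hQlt
  have hQabs : ∀ i ∈ Q, |xs i - x i| = |x i - xs i| := fun i _ => abs_sub_comm _ _
  rw [Finset.sum_congr rfl hQabs] at hQle hQlt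
  have hsplit : ∑ i ∈ N, |x i - xs i| = ∑ i ∈ P, |x i - xs i| + ∑ i ∈ Q, |x i - xs i| := by
    rw [← hunion, Finset.sum_union hdisj]
  have hcard : (N.card : ℤ) = P.card + Q.card := by
    rw [← hunion, Finset.card_union_of_disjoint hdisj]; push_cast; ring
  rw [hsplit, hcard]
  obtain ⟨i, hi⟩ := hN
  rw [← hunion, Finset.mem_union] at hi
  rcases hi.imp (fun h => hPlt ⟨i, h⟩) (fun h => hQlt ⟨i, h⟩) with h | h <;> nlinarith
end
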